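/- Assume the PRK coefficients satisfy b_i = B_i for all i and b_i A_{ij} + B_j a_{ji} − b_i B_j = 0 for all i, j = 1,…,s, and let h₀,…,h_{N−1} ∈ ℝ. For each n = 0,…,N−1 and i = 1,…,s let M_{n,i} be a real d × d matrix, N_{n,i} a real d × ν matrix, G_{n,i} ∈ ℝ^d and g_{n,i} ∈ ℝ^ν. Suppose δ₀,…,δ_N ∈ ℝ^d and Z_{n,i} ∈ ℝ^ν satisfy δ_{n+1} = δ_n + h_n Σ_{i=1}^s b_i d_{n,i} with d_{n,i} = M_{n,i} Δ_{n,i} + N_{n,i} Z_{n,i} and Δ_{n,i} = δ_n + h_n Σ_{j=1}^s a_{ij} d_{n,j}; suppose λ₀,…,λ_N ∈ ℝ^d satisfy λ_{n+1} = λ_n + h_n Σ_{i=1}^s B_i ℓ_{n,i} with ℓ_{n,i} = −M_{n,i}ᵀ Λ_{n,i} − G_{n,i} and Λ_{n,i} = λ_n + h_n Σ_{j=1}^s A_{ij} ℓ_{n,j}; and suppose N_{n,i}ᵀ Λ_{n,i} + g_{n,i} = 0 for all n and i. Then λ_Nᵀ δ_N − λ₀ᵀ δ₀ + Σ_{n=0}^{N−1}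 h_n Σ_{i=1}^s b_i ( G_{n,i}ᵀ Δ_{n,i} + g_{n,i}ᵀ Z_{n,i} ) = 0. -/

import Mathlib

open Matrix BigOperators

/-!
A symplectic PRK step obeys the discrete product rule
`λ₁ᵀδ₁ - λ₀ᵀδ₀ = h Σᵢ bᵢ (Λᵢᵀ dᵢ + ℓᵢᵀ Δᵢ)`: expanding both sides, the `h²` cross terms
`bᵢ bⱼ`, `bᵢ Aᵢⱼ`, `bⱼ aⱼᵢ` cancel exactly by the symplecticity condition. By the adjoint
equations and the constraint each stage term `Λᵢᵀ dᵢ + ℓᵢᵀ Δᵢ` equals `-(Gᵢᵀ Δᵢ + gᵢᵀ Zᵢ)`,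
and summing the product rule over the steps telescopes.
-/

theorem Fin.sum_succ_sub_castSucc {M : Type*} [AddCommGroup M] {n : ℕ} (f : Fin (n + 1) → M) :
    ∑ i : Fin n, (f i.succ - f i.castSucc) = f (Fin.last n) - f 0 := by
  rw [Finset.sum_sub_distrib, sub_eq_sub_iff_add_eq_add, add_comm _ (f 0), ← Fin.sum_univ_succ,
    Fin.sum_univ_castSucc, add_comm]

section
variable {R m s : Type*} [CommRing R] [Fintype m] [Fintype s]

theorem sum_sum_mul_eq_of_symplectic {a A : s → s → R} {b : s → R}
    (hsymp : ∀ i j, b i * A i j + b j * a j i - b i * b j = 0) (c : s → s → R) :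
    ∑ i, ∑ j, b i * b j * c j i = ∑ i, ∑ j, (b i * A i j * c j i + b i * a i j * c i j) := by
  calc ∑ i, ∑ j, b i * b j * c j i
      = ∑ i, ∑ j, (b i * A i j * c j i + b j * a j i * c j i) :=
        Finset.sum_congr rfl fun i _ => Finset.sum_congr rfl fun j _ => by
          linear_combination (-c j i) * hsymp i j
    _ = _ := by
      simp only [Finset.sum_add_distrib]
      exact congrArg _ Finset.sum_comm

theorem dotProduct_symplecticPRK_step (a A : s → s → R) (b : s → R)
    (hsymp : ∀ i j, b i * A i j + b j * a j i - b i * b j = 0)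
    (h : R) (x p : m → R) (k l X P : s → m → R)
    (hX : ∀ i, X i = x + h • ∑ j, a i j • k j) (hP : ∀ i, P i = p + h • ∑ j, A i j • l j) :
    (p + h • ∑ i, b i • l i) ⬝ᵥ (x + h • ∑ i, b i • k i) - p ⬝ᵥ x =
      h * ∑ i, b i * (P i ⬝ᵥ k i + l i ⬝ᵥ X i) := by
  have key := congrArg (h * h * ·) (sum_sum_mul_eq_of_symplectic hsymp fun i j => l i ⬝ᵥ k j)
  simp only [Finset.mul_sum, Finset.sum_add_distrib, mul_add] at key
  simp only [hX, hP, dotProduct_add, add_dotProduct, dotProduct_smul, smul_dotProduct,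
    dotProduct_sum, sum_dotProduct, smul_eq_mul, Finset.mul_sum, Finset.sum_add_distrib, mul_add]
  linear_combination (norm := ring_nf) key

theorem dotProduct_linearised_add_adjoint {k : Type*} [Fintype k] (M : Matrix m m R)
    (Nm : Matrix m k R) (G Δ Λ : m → R) (g Z : k → R) (hc : Nmᵀ *ᵥ Λ + g = 0) :
    Λ ⬝ᵥ (M *ᵥ Δ + Nm *ᵥ Z) + (-(Mᵀ *ᵥ Λ) - G) ⬝ᵥ Δ = -(G ⬝ᵥ Δ + g ⬝ᵥ Z) := by
  rw [eq_neg_of_add_eq_zero_right hc, dotProduct_add, dotProduct_mulVec, dotProduct_mulVec,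
    ← mulVec_transpose, ← mulVec_transpose]
  simp only [sub_dotProduct, neg_dotProduct]
  ring

end

/-- The discrete generalised conservation identity of Section 5.2 (Mayer–Lagrange
costs): for a symplectic PRK discretisation of the optimality system with
costate slopes `ℓ = −Mᵀ Λ − G` and constraints `Nᵀ Λ + g = 0`,
`λ_Nᵀ δ_N − λ₀ᵀ δ₀ + Σ_n h_n Σ_i b_i (G_{n,i}ᵀ Δ_{n,i} + g_{n,i}ᵀ Z_{n,i}) = 0`. -/
theorem stmt_19 (d ν s N : ℕ)
    (a A : Fin s → Fin s → ℝ) (b B : Fin s → ℝ)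
    (hbB : ∀ i, b i = B i)
    (hsymp : ∀ i j, b i * A i j + B j * a j i - b i * B j = 0)
    (h : Fin N → ℝ)
    (M : Fin N → Fin s → Matrix (Fin d) (Fin d) ℝ)
    (Nm : Fin N → Fin s → Matrix (Fin d) (Fin ν) ℝ)
    (G : Fin N → Fin s → Fin d → ℝ) (g : Fin N → Fin s → Fin ν → ℝ)
    (δ lam : Fin (N + 1) → Fin d → ℝ)
    (dd Δ ell Lam : Fin N → Fin s → Fin d → ℝ)
    (Z : Fin N → Fin s → Fin ν → ℝ)
    (hδstep : ∀ n : Fin N, δ n.succ = δ n.castSucc + h n • ∑ i, b i • dd n i)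
    (hdd : ∀ (n : Fin N) (i : Fin s),
      dd n i = (M n i).mulVec (Δ n i) + (Nm n i).mulVec (Z n i))
    (hΔ : ∀ (n : Fin N) (i : Fin s),
      Δ n i = δ n.castSucc + h n • ∑ j, a i j • dd n j)
    (hlamstep : ∀ n : Fin N, lam n.succ = lam n.castSucc + h n • ∑ i, B i • ell n i)
    (hell : ∀ (n : Fin N) (i : Fin s),
      ell n i = -((M n i)ᵀ.mulVec (Lam n i)) - G n i)
    (hLam : ∀ (n : Fin N) (i : Fin s),
      Lam n i = lam n.castSucc + h n • ∑ j, A i j • ell n j)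
    (hconstraint : ∀ (n : Fin N) (i : Fin s),
      (Nm n i)ᵀ.mulVec (Lam n i) + g n i = 0) :
    lam (Fin.last N) ⬝ᵥ δ (Fin.last N) - lam 0 ⬝ᵥ δ 0 +
      ∑ n : Fin N, h n * ∑ i, b i * (G n i ⬝ᵥ Δ n i + g n i ⬝ᵥ Z n i) = 0 := by
  obtain rfl : b = B := funext hbB
  have hstep (n : Fin N) : lam n.succ ⬝ᵥ δ n.succ - lam n.castSucc ⬝ᵥ δ n.castSucc =
      -(h n * ∑ i, b i * (G n i ⬝ᵥ Δ n i + g n i ⬝ᵥ Z n i)) := by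
    have hstage (i : Fin s) : Lam n i ⬝ᵥ dd n i + ell n i ⬝ᵥ Δ n i =
        -(G n i ⬝ᵥ Δ n i + g n i ⬝ᵥ Z n i) := by
      rw [hdd, hell]
      exact dotProduct_linearised_add_adjoint _ _ _ _ _ _ _ (hconstraint n i)
    rw [hlamstep, hδstep,
      dotProduct_symplecticPRK_step a A b hsymp (h n) _ _ _ _ _ _ (hΔ n) (hLam n)]
    simp only [hstage, mul_neg, Finset.sum_neg_distrib]
  rw [← Fin.sum_succ_sub_castSucc fun n => lam n ⬝ᵥ δ n]
  simp only [hstep, Finset.sum_neg_distrib, neg_add_cancel]
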